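/- arXiv:2301.04782 — 4 statements merged into one kernel-verified Lean document; each statement's English description precedes it below -/
import Mathlib

section
/- For a single-qubit density matrix ρ, the maximum fidelity achievable with the maximally imaginary state |+̂⟩ = (|0⟩+i|1⟩)/√2 under real channels equals (1 + |tr(ρ σ_y)|)/2, i.e., the fidelity of imaginarity of a qubit state is F_I(ρ) = (1 + |Im ρ_{01}|·2)/2 = (1 + |tr(ρ σ_y)|)/2. -/
/-!
Since `Pplus = (1 + σ_y)/2` and `Σ Kⱼᴴ Kⱼ = 1`, the fidelity of `Σ Kⱼ ρ Kⱼᴴ` with `|+̂⟩` is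
`(tr ρ + Σ tr(ρ Kⱼᵀ σ_y Kⱼ))/2` once `Kⱼᴴ = Kⱼᵀ`. For every 2×2 matrix, `Kᵀ σ_y K = det K • σ_y`,
so the fidelity is the real part of `(1 + (Σ det Kⱼ) tr(ρ σ_y))/2`. By AM-GM,
`|det K| ≤ tr(Kᴴ K)/2`, hence `|Σ det Kⱼ| ≤ 1`. The bound is attained by the single real
orthogonal Kraus operator `1` or `σ_x`, whose determinant `±1` matches the sign of the real
number `tr(ρ σ_y)`.
-/

open Matrix ComplexOrder

noncomputable def sigmaY : Matrix (Fin 2) (Fin 2) ℂ := !![0, -Complex.I; Complex.I, 0]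

/-- Projector onto the maximally imaginary state |+̂⟩ = (|0⟩ + i|1⟩)/√2. -/
noncomputable def Pplus : Matrix (Fin 2) (Fin 2) ℂ :=
  (1/2 : ℂ) • !![1, -Complex.I; Complex.I, 1]

theorem Matrix.transpose_mul_antidiag_mul_fin_two {R : Type*} [CommRing R]
    (K : Matrix (Fin 2) (Fin 2) R) (c : R) :
    Kᵀ * !![0, -c; c, 0] * K = K.det • !![0, -c; c, 0] := by
  ext i j
  fin_cases i <;> fin_cases j <;> simp [det_fin_two, mul_apply] <;> ring

theorem transpose_mul_sigmaY_mul (K : Matrix (Fin 2) (Fin 2) ℂ) :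
    Kᵀ * sigmaY * K = K.det • sigmaY :=
  K.transpose_mul_antidiag_mul_fin_two Complex.I

theorem sigmaY_isHermitian : sigmaY.IsHermitian := by
  ext i j
  fin_cases i <;> fin_cases j <;> simp [sigmaY]

theorem Pplus_eq : Pplus = (1 / 2 : ℂ) • (1 + sigmaY) := by
  ext i j
  fin_cases i <;> fin_cases j <;> simp [Pplus, sigmaY]

theorem Matrix.conjTranspose_eq_transpose_of_im_eq_zero {m n : Type*}
    (K : Matrix m n ℂ) (hK : ∀ a b, (K a b).im = 0) : Kᴴ = Kᵀ := by
  ext i j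
  exact Complex.conj_eq_iff_im.mpr (hK j i)

theorem Matrix.IsHermitian.im_trace_mul {n : Type*} [Fintype n] {A B : Matrix n n ℂ}
    (hA : A.IsHermitian) (hB : B.IsHermitian) : (A * B).trace.im = 0 := by
  rw [← Complex.conj_eq_iff_im]
  change star _ = _
  rw [← trace_conjTranspose, conjTranspose_mul, hA.eq, hB.eq, trace_mul_comm]

theorem trace_mul_mul_conjTranspose_mul_Pplus (ρ K : Matrix (Fin 2) (Fin 2) ℂ) (hK : Kᴴ = Kᵀ) :
    (K * ρ * Kᴴ * Pplus).trace = ((Kᴴ * K * ρ).trace + K.det * (ρ * sigmaY).trace) / 2 := by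
  have hσ : (K * ρ * Kᴴ * sigmaY).trace = K.det * (ρ * sigmaY).trace :=
    calc (K * ρ * Kᴴ * sigmaY).trace = (ρ * (Kᵀ * sigmaY * K)).trace := by
          rw [hK]
          simp only [Matrix.mul_assoc]
          rw [trace_mul_comm]
          simp only [Matrix.mul_assoc]
      _ = K.det * (ρ * sigmaY).trace := by
          rw [transpose_mul_sigmaY_mul, mul_smul_comm, trace_smul, smul_eq_mul]
  rw [Pplus_eq, mul_smul_comm, trace_smul, mul_add, trace_add, Matrix.mul_one, hσ,
    trace_mul_cycle, smul_eq_mul]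
  ring

theorem trace_sum_mul_mul_conjTranspose_mul_Pplus {ι : Type*} [Fintype ι]
    (ρ : Matrix (Fin 2) (Fin 2) ℂ) (K : ι → Matrix (Fin 2) (Fin 2) ℂ) (hK : ∀ j, (K j)ᴴ = (K j)ᵀ)
    (hsum : ∑ j, (K j)ᴴ * K j = 1) :
    ((∑ j, K j * ρ * (K j)ᴴ) * Pplus).trace
      = (ρ.trace + (∑ j, (K j).det) * (ρ * sigmaY).trace) / 2 := by
  simp_rw [Finset.sum_mul, trace_sum, trace_mul_mul_conjTranspose_mul_Pplus ρ _ (hK _),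
    ← Finset.sum_div, Finset.sum_add_distrib, ← trace_sum, ← Finset.sum_mul, hsum, Matrix.one_mul]

theorem norm_det_le_re_trace_conjTranspose_mul_self (K : Matrix (Fin 2) (Fin 2) ℂ) :
    ‖K.det‖ ≤ (Kᴴ * K).trace.re / 2 := by
  have htr : (Kᴴ * K).trace.re = ‖K 0 0‖ ^ 2 + ‖K 0 1‖ ^ 2 + ‖K 1 0‖ ^ 2 + ‖K 1 1‖ ^ 2 := by
    simp [trace, mul_apply, Complex.sq_norm, Complex.normSq_apply]
    ring
  calc ‖K.det‖ ≤ ‖K 0 0‖ * ‖K 1 1‖ + ‖K 0 1‖ * ‖K 1 0‖ := by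
        rw [det_fin_two, ← norm_mul, ← norm_mul]
        exact norm_sub_le _ _
    _ ≤ (Kᴴ * K).trace.re / 2 := by
        rw [htr]
        nlinarith [sq_nonneg (‖K 0 0‖ - ‖K 1 1‖), sq_nonneg (‖K 0 1‖ - ‖K 1 0‖)]

theorem norm_sum_det_le_one {ι : Type*} [Fintype ι] (K : ι → Matrix (Fin 2) (Fin 2) ℂ)
    (hsum : ∑ j, (K j)ᴴ * K j = 1) : ‖∑ j, (K j).det‖ ≤ 1 :=
  calc ‖∑ j, (K j).det‖ ≤ ∑ j, ‖(K j).det‖ := norm_sum_le _ _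
    _ ≤ ∑ j, ((K j)ᴴ * K j).trace.re / 2 :=
        Finset.sum_le_sum fun j _ => norm_det_le_re_trace_conjTranspose_mul_self (K j)
    _ = 1 := by
        rw [← Finset.sum_div, ← Complex.re_sum, ← trace_sum, hsum]
        norm_num

theorem exists_real_orthogonal_det_mul_eq_norm {t : ℂ} (ht : t.im = 0) :
    ∃ K : Matrix (Fin 2) (Fin 2) ℂ, (∀ a b, (K a b).im = 0) ∧ Kᴴ * K = 1 ∧ K.det * t = ‖t‖ := by
  have ht' : t = (t.re : ℂ) := Complex.ext rfl (by simp [ht])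
  rcases le_or_gt 0 t.re with h | h
  · refine ⟨1, fun a b => ?_, by simp, ?_⟩
    · fin_cases a <;> fin_cases b <;> simp
    · rw [det_one, one_mul, ht', Complex.norm_real, Real.norm_of_nonneg h]
  · refine ⟨!![0, 1; 1, 0], fun a b => ?_, ?_, ?_⟩
    · fin_cases a <;> fin_cases b <;> simp
    · ext a b
      fin_cases a <;> fin_cases b <;> simp [mul_apply]
    · rw [det_fin_two_of, ht', Complex.norm_real, Real.norm_of_nonpos h.le]
      push_cast
      ring

/-- The fidelity of imaginarity of a qubit state: the supremum over real channels
(CPTP maps with real Kraus operators) of the fidelity of the output with |+̂⟩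
equals (1 + |tr(ρ σ_y)|)/2, and it is attained. -/
theorem fidelity_of_imaginarity_qubit (ρ : Matrix (Fin 2) (Fin 2) ℂ)
    (hρ : ρ.PosSemidef) (htr : ρ.trace = 1) :
    IsGreatest {x : ℝ | ∃ (n : ℕ) (K : Fin n → Matrix (Fin 2) (Fin 2) ℂ),
        (∀ j a b, ((K j) a b).im = 0) ∧
        (∑ j, (K j)ᴴ * K j = 1) ∧
        x = ((∑ j, K j * ρ * (K j)ᴴ) * Pplus).trace.re}
      (((1 + ‖(ρ * sigmaY).trace‖) / 2 : ℝ)) := by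
  constructor
  · obtain ⟨K, hKreal, hKunitary, hdet⟩ :=
      exists_real_orthogonal_det_mul_eq_norm (hρ.isHermitian.im_trace_mul sigmaY_isHermitian)
    have hsum : ∑ _ : Fin 1, Kᴴ * K = 1 := by simpa using hKunitary
    refine ⟨1, fun _ => K, fun _ => hKreal, hsum, ?_⟩
    rw [trace_sum_mul_mul_conjTranspose_mul_Pplus ρ _
      (fun _ => K.conjTranspose_eq_transpose_of_im_eq_zero hKreal) hsum, htr, Fin.sum_univ_one,
      hdet]
    norm_cast
  · rintro x ⟨n, K, hKreal, hsum, rfl⟩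
    rw [trace_sum_mul_mul_conjTranspose_mul_Pplus ρ K
      (fun j => (K j).conjTranspose_eq_transpose_of_im_eq_zero (hKreal j)) hsum, htr]
    calc ((1 + (∑ j, (K j).det) * (ρ * sigmaY).trace) / 2).re
        = (1 + ((∑ j, (K j).det) * (ρ * sigmaY).trace).re) / 2 := by simp
      _ ≤ (1 + ‖(∑ j, (K j).det) * (ρ * sigmaY).trace‖) / 2 := by
          gcongr
          exact Complex.re_le_norm _
      _ ≤ (1 + ‖(ρ * sigmaY).trace‖) / 2 := by
          gcongr
          rw [norm_mul]
          exact mul_le_of_le_one_left (norm_nonneg _) (norm_sum_det_le_one K hsum)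
end

section
/- For any density matrix ρ with spectral decomposition ρ = Σⱼ pⱼ|ψⱼ⟩⟨ψⱼ|, the minimum over s ∈ [0,1] of tr(ρ^s (ρ^T)^{1−s}) is attained at s = 1/2, and equals tr√(√ρ ρ^T √ρ) computed as Σ_{j,k} √(pⱼ p_k) |⟨ψⱼ|ψ_k*⟩|², i.e., min_{0≤s≤1} tr(ρ^s (ρ^T)^{1−s}) = Σ_{j,k} √(pⱼ p_k) |⟨ψⱼ|ψ_k*⟩|². -/
/-!
Expanding in the eigenbasis, tr(ρ^s (ρᵀ)^{1−s}) = Σ_{j,k} pⱼ^s p_k^{1−s} a_{jk}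
with a_{jk} = |⟨ψⱼ|ψ_k*⟩|² ≥ 0 symmetric in j and k. Symmetry makes this sum invariant under
s ↦ 1 − s, so it is the average of the sums at s and 1 − s, and termwise AM–GM
pⱼ^s p_k^{1−s} + pⱼ^{1−s} p_k^s ≥ 2√(pⱼ p_k) bounds that average below by its value at s = 1/2. -/

open Matrix ComplexOrder

/-- Given the spectral data (p, ψ) of ρ, the matrix power ρ^s = Σⱼ pⱼ^s |ψⱼ⟩⟨ψⱼ|. -/
noncomputable def rhoPow {d : ℕ} (p : Fin d → ℝ) (ψ : Fin d → Fin d → ℂ) (s : ℝ) :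
    Matrix (Fin d) (Fin d) ℂ :=
  ∑ j, ((p j ^ s : ℝ) : ℂ) • Matrix.vecMulVec (ψ j) (fun i => star (ψ j i))

/-- The corresponding power of the transpose, (ρᵀ)^s = Σ_k p_k^s |ψ_k*⟩⟨ψ_k*|. -/
noncomputable def rhoTransposePow {d : ℕ} (p : Fin d → ℝ) (ψ : Fin d → Fin d → ℂ) (s : ℝ) :
    Matrix (Fin d) (Fin d) ℂ :=
  ∑ k, ((p k ^ s : ℝ) : ℂ) • Matrix.vecMulVec (fun i => star (ψ k i)) (ψ k)

theorem Matrix.trace_vecMulVec_star_mul_vecMulVec_star {n : Type*} [Fintype n] (u v : n → ℂ) :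
    (vecMulVec u (star u) * vecMulVec (star v) v).trace = ((‖star u ⬝ᵥ star v‖ ^ 2 : ℝ) : ℂ) := by
  rw [vecMulVec_mul_vecMulVec, trace_vecMulVec, dotProduct_smul, smul_eq_mul,
    Complex.sq_norm, Complex.normSq_eq_conj_mul_self, star_dotProduct_star, ← Complex.star_def,
    star_star, dotProduct_comm u, mul_comm]

theorem re_trace_rhoPow_mul_rhoTransposePow {d : ℕ} (p : Fin d → ℝ) (ψ : Fin d → Fin d → ℂ)
    (s t : ℝ) :
    ((rhoPow p ψ s * rhoTransposePow p ψ t).trace).re =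
      ∑ j, ∑ k, p j ^ s * p k ^ t * ‖∑ i, star (ψ j i) * star (ψ k i)‖ ^ 2 := by
  simp_rw [rhoPow, rhoTransposePow, Finset.sum_mul, Finset.mul_sum, smul_mul_smul, trace_sum,
    trace_smul, ← Pi.star_def, trace_vecMulVec_star_mul_vecMulVec_star]
  simp only [Complex.re_sum, smul_eq_mul, ← Complex.ofReal_mul, Complex.ofReal_re]
  rfl

theorem Real.two_mul_sqrt_mul_le_rpow_add {x y : ℝ} (hx : 0 ≤ x) (hy : 0 ≤ y) (s : ℝ) :
    2 * √(x * y) ≤ x ^ s * y ^ (1 - s) + x ^ (1 - s) * y ^ s := by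
  set A := x ^ s * y ^ (1 - s)
  set B := x ^ (1 - s) * y ^ s
  have hA : 0 ≤ A := by positivity
  have hB : 0 ≤ B := by positivity
  have hAB : A * B = x * y := by
    calc A * B = x ^ (s + (1 - s)) * y ^ ((1 - s) + s) := by
          rw [rpow_add' hx (by norm_num), rpow_add' hy (by norm_num)]; ring
      _ = x * y := by norm_num
  calc 2 * √(x * y) = 2 * √A * √B := by rw [← hAB, sqrt_mul hA, mul_assoc]
    _ ≤ √A ^ 2 + √B ^ 2 := two_mul_le_add_sq _ _
    _ = A + B := by rw [sq_sqrt hA, sq_sqrt hB]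

theorem sum_sqrt_mul_le_sum_rpow_mul {ι : Type*} [Fintype ι] {p : ι → ℝ} {a : ι → ι → ℝ}
    (hp : ∀ j, 0 ≤ p j) (ha : ∀ j k, 0 ≤ a j k) (ha_symm : ∀ j k, a j k = a k j) (s : ℝ) :
    ∑ j, ∑ k, √(p j * p k) * a j k ≤ ∑ j, ∑ k, p j ^ s * p k ^ (1 - s) * a j k := by
  have hswap : ∑ j, ∑ k, p j ^ (1 - s) * p k ^ s * a j k =
      ∑ j, ∑ k, p j ^ s * p k ^ (1 - s) * a j k := by
    rw [Finset.sum_comm]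
    refine Finset.sum_congr rfl fun j _ => Finset.sum_congr rfl fun k _ => ?_
    rw [ha_symm]; ring
  have h2 : 2 * ∑ j, ∑ k, √(p j * p k) * a j k ≤ 2 * ∑ j, ∑ k, p j ^ s * p k ^ (1 - s) * a j k :=
    calc 2 * ∑ j, ∑ k, √(p j * p k) * a j k = ∑ j, ∑ k, 2 * √(p j * p k) * a j k := by
          simp only [Finset.mul_sum, mul_assoc]
      _ ≤ ∑ j, ∑ k, (p j ^ s * p k ^ (1 - s) + p j ^ (1 - s) * p k ^ s) * a j k := by
          gcongr with j _ k _
          · exact ha j k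
          · exact Real.two_mul_sqrt_mul_le_rpow_add (hp j) (hp k) s
      _ = 2 * ∑ j, ∑ k, p j ^ s * p k ^ (1 - s) * a j k := by
          simp only [add_mul, Finset.sum_add_distrib, hswap]; ring
  linarith

theorem chernoff_min_at_half_general {d : ℕ} (p : Fin d → ℝ) (ψ : Fin d → Fin d → ℂ)
    (hp : ∀ j, 0 < p j) :
    IsLeast {x : ℝ | ∃ s ∈ Set.Icc (0 : ℝ) 1,
        x = ((rhoPow p ψ s * rhoTransposePow p ψ (1 - s)).trace).re}
      (∑ j, ∑ k, Real.sqrt (p j * p k) *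
        ‖∑ i, star (ψ j i) * star (ψ k i)‖ ^ 2) := by
  refine ⟨⟨1 / 2, ⟨by norm_num, by norm_num⟩, ?_⟩, ?_⟩
  · rw [re_trace_rhoPow_mul_rhoTransposePow, show (1 : ℝ) - 1 / 2 = 1 / 2 by norm_num]
    simp_rw [Real.sqrt_eq_rpow, Real.mul_rpow (hp _).le (hp _).le]
  · rintro _ ⟨s, -, rfl⟩
    rw [re_trace_rhoPow_mul_rhoTransposePow]
    refine sum_sqrt_mul_le_sum_rpow_mul (fun j => (hp j).le) (fun _ _ => by positivity)
      (fun j k => ?_) s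
    simp_rw [mul_comm (star (ψ j _))]

/-- For a positive definite density matrix ρ = Σⱼ pⱼ|ψⱼ⟩⟨ψⱼ|, the minimum over s ∈ [0,1]
of tr(ρ^s (ρᵀ)^{1−s}) is attained at s = 1/2 and equals Σ_{j,k} √(pⱼp_k)|⟨ψⱼ|ψ_k*⟩|². -/
theorem chernoff_min_at_half {d : ℕ} (p : Fin d → ℝ) (ψ : Fin d → Fin d → ℂ)
    (hp : ∀ j, 0 < p j) (hsum : ∑ j, p j = 1)
    (horth : ∀ j k, (∑ i, star (ψ j i) * ψ k i) = if j = k then 1 else 0) :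
    IsLeast {x : ℝ | ∃ s ∈ Set.Icc (0 : ℝ) 1,
        x = ((rhoPow p ψ s * rhoTransposePow p ψ (1 - s)).trace).re}
      (∑ j, ∑ k, Real.sqrt (p j * p k) *
        ‖∑ i, star (ψ j i) * star (ψ k i)‖ ^ 2) :=
  chernoff_min_at_half_general p ψ hp
end

section
/- Let {K_j} be Kraus operators of a quantum operation on ℂ^d with Σⱼ Kⱼ†Kⱼ = P ≤ 𝟙. Define operators on ℂ^d ⊗ ℂ² by L_j = K_j ⊗ |+̂⟩⟨+̂| + K_j* ⊗ |−̂⟩⟨−̂|, where |±̂⟩ = (|0⟩ ± i|1⟩)/√2 and K_j* is the entrywise complex conjugate. Then (i) each L_j has all real matrix entries in the computational product basis, (ii) Σⱼ Lⱼ†Lⱼ = P ⊗ |+̂⟩⟨+̂| + P^T ⊗ |−̂⟩⟨−̂| ≤ 𝟙 ⊗ 𝟙, and (iii) for any density matrix ρ on ℂ^d, Σⱼ Lⱼ (ρ ⊗ |+̂⟩⟨+̂|) Lⱼ† = (Σⱼ Kⱼ ρ Kⱼ†) ⊗ |+̂⟩⟨+̂|. -/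
/-!
`Pplus` is a self-adjoint idempotent and `Pminus = 1 - Pplus`, so matrices of the form
`A ⊗ Pplus + B ⊗ Pminus` are block diagonal: they multiply, take adjoints and are positive
blockwise. Since `K* = Kᴴᵀ`, the `Pminus` block of `Lⱼᴴ Lⱼ` is `Kⱼᵀ Kⱼ* = (Kⱼᴴ Kⱼ)ᵀ`, while
`ρ ⊗ Pplus` lives in the `Pplus` block alone and only sees `Kⱼ`. The entries of `Lⱼ` are real
because `Pminus` is the entrywise conjugate of `Pplus`, so `Lⱼ = M + M*` with `M = Kⱼ ⊗ Pplus`.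
-/

open Matrix ComplexOrder Kronecker

/-- Projector onto |−̂⟩ = (|0⟩ − i|1⟩)/√2. -/
noncomputable def Pminus : Matrix (Fin 2) (Fin 2) ℂ :=
  (1/2 : ℂ) • !![1, Complex.I; -Complex.I, 1]

theorem IsStarProjection.posSemidef {𝕜 n : Type*} [RCLike 𝕜] [Fintype n] {p : Matrix n n 𝕜}
    (hp : IsStarProjection p) : p.PosSemidef := by
  open scoped MatrixOrder in exact Matrix.nonneg_iff_posSemidef.mp hp.nonneg

namespace Matrix

variable {R : Type*} {l m n o : Type*}

theorem sub_kronecker [Ring R] (A B : Matrix l m R) (C : Matrix n o R) :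
    (A - B) ⊗ₖ C = A ⊗ₖ C - B ⊗ₖ C := by
  ext; simp [sub_mul]

theorem sum_kronecker [NonUnitalNonAssocSemiring R] {ι : Type*} (s : Finset ι)
    (A : ι → Matrix l m R) (B : Matrix n o R) :
    (∑ i ∈ s, A i) ⊗ₖ B = ∑ i ∈ s, A i ⊗ₖ B := by
  ext; simp [sum_apply, Finset.sum_mul]

theorem map_star_kronecker [CommSemiring R] [StarRing R] (A : Matrix l m R) (B : Matrix n o R) :
    (A ⊗ₖ B).map star = A.map star ⊗ₖ B.map star := by
  ext; simp

section

variable [DecidableEq n] {p : Matrix n n R}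

theorem kronecker_add_kronecker_one_sub_mul [CommRing R] [Fintype m] [Fintype n]
    (hp : IsIdempotentElem p) (A B : Matrix l m R) (C D : Matrix m o R) :
    (A ⊗ₖ p + B ⊗ₖ (1 - p)) * (C ⊗ₖ p + D ⊗ₖ (1 - p)) = (A * C) ⊗ₖ p + (B * D) ⊗ₖ (1 - p) := by
  simp only [Matrix.add_mul, Matrix.mul_add, ← mul_kronecker_mul, hp.eq, hp.mul_one_sub_self,
    hp.one_sub_mul_self, hp.one_sub.eq, kronecker_zero, add_zero, zero_add]

theorem conjTranspose_kronecker_add_kronecker_one_sub [CommRing R] [StarRing R]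
    (hp : p.IsHermitian) (A B : Matrix l m R) :
    (A ⊗ₖ p + B ⊗ₖ (1 - p))ᴴ = Aᴴ ⊗ₖ p + Bᴴ ⊗ₖ (1 - p) := by
  rw [conjTranspose_add, conjTranspose_kronecker, conjTranspose_kronecker,
    conjTranspose_sub, conjTranspose_one, hp.eq]

theorem one_sub_kronecker_add_kronecker_one_sub [CommRing R] [DecidableEq l]
    (A B : Matrix l l R) :
    1 - (A ⊗ₖ p + B ⊗ₖ (1 - p)) = (1 - A) ⊗ₖ p + (1 - B) ⊗ₖ (1 - p) := by
  have hone : (1 : Matrix (l × n) (l × n) R) = 1 ⊗ₖ p + 1 ⊗ₖ (1 - p) := by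
    rw [← kronecker_add, add_sub_cancel, one_kronecker_one]
  rw [hone, sub_kronecker, sub_kronecker]
  abel

theorem PosSemidef.kronecker_add_kronecker_one_sub {𝕜 : Type*} [RCLike 𝕜] [Fintype l]
    [Fintype n] {p : Matrix n n 𝕜} (hp : IsStarProjection p)
    {A B : Matrix l l 𝕜} (hA : A.PosSemidef) (hB : B.PosSemidef) :
    (A ⊗ₖ p + B ⊗ₖ (1 - p)).PosSemidef :=
  (hA.kronecker hp.posSemidef).add (hB.kronecker hp.one_sub.posSemidef)

end

end Matrix

theorem isStarProjection_Pplus : IsStarProjection Pplus := by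
  refine ⟨?_, ?_⟩
  · ext i j
    fin_cases i <;> fin_cases j <;>
      simp [Pplus, mul_apply, Fin.sum_univ_two, Complex.ext_iff] <;> norm_num
  · ext i j
    fin_cases i <;> fin_cases j <;> simp [Pplus]

theorem Pminus_eq_one_sub_Pplus : Pminus = 1 - Pplus := by
  ext i j
  fin_cases i <;> fin_cases j <;> simp [Pplus, Pminus, Complex.ext_iff] <;> norm_num

theorem map_star_Pplus : Pplus.map star = Pminus := by
  ext i j
  fin_cases i <;> fin_cases j <;> simp [Pplus, Pminus, Complex.ext_iff]

noncomputable def realDilation {l m : Type*} (A : Matrix l m ℂ) :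
    Matrix (l × Fin 2) (m × Fin 2) ℂ :=
  A ⊗ₖ Pplus + A.map star ⊗ₖ Pminus

section

variable {l m : Type*}

theorem realDilation_eq (A : Matrix l m ℂ) :
    realDilation A = A ⊗ₖ Pplus + Aᴴᵀ ⊗ₖ (1 - Pplus) := by
  rw [realDilation, Pminus_eq_one_sub_Pplus, conjTranspose_transpose]

theorem conjTranspose_realDilation (A : Matrix l m ℂ) :
    (realDilation A)ᴴ = Aᴴ ⊗ₖ Pplus + Aᵀ ⊗ₖ (1 - Pplus) := by
  rw [realDilation_eq, conjTranspose_kronecker_add_kronecker_one_sub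
    isStarProjection_Pplus.isSelfAdjoint, conjTranspose_transpose_eq_transpose_conjTranspose,
    conjTranspose_conjTranspose]

theorem realDilation_apply_im (A : Matrix l m ℂ) (x : l × Fin 2) (y : m × Fin 2) :
    (realDilation A x y).im = 0 := by
  rw [realDilation, ← map_star_Pplus, ← map_star_kronecker, Matrix.add_apply, map_apply,
    Complex.add_im, Complex.star_def, Complex.conj_im, add_neg_cancel]

theorem conjTranspose_realDilation_mul_self [Fintype l] (A : Matrix l m ℂ) :
    (realDilation A)ᴴ * realDilation A = (Aᴴ * A) ⊗ₖ Pplus + (Aᴴ * A)ᵀ ⊗ₖ Pminus := by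
  rw [conjTranspose_realDilation, realDilation_eq,
    kronecker_add_kronecker_one_sub_mul isStarProjection_Pplus.isIdempotentElem, transpose_mul,
    Pminus_eq_one_sub_Pplus]

theorem realDilation_mul_kronecker_Pplus_mul_conjTranspose [Fintype m] (A : Matrix l m ℂ)
    (ρ : Matrix m m ℂ) :
    realDilation A * (ρ ⊗ₖ Pplus) * (realDilation A)ᴴ = (A * ρ * Aᴴ) ⊗ₖ Pplus := by
  have hp := isStarProjection_Pplus.isIdempotentElem
  have hρ : ρ ⊗ₖ Pplus = ρ ⊗ₖ Pplus + 0 ⊗ₖ (1 - Pplus) := by rw [zero_kronecker, add_zero]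
  rw [hρ, conjTranspose_realDilation, realDilation_eq, kronecker_add_kronecker_one_sub_mul hp,
    kronecker_add_kronecker_one_sub_mul hp, Matrix.mul_zero, Matrix.zero_mul, zero_kronecker,
    add_zero]

end

theorem real_dilation_with_one_imbit_general {d m : ℕ}
    (K : Fin m → Matrix (Fin d) (Fin d) ℂ) (P : Matrix (Fin d) (Fin d) ℂ)
    (hKP : ∑ j, (K j)ᴴ * K j = P) (hP : (1 - P).PosSemidef)
    (ρ : Matrix (Fin d) (Fin d) ℂ)
    (L : Fin m → Matrix (Fin d × Fin 2) (Fin d × Fin 2) ℂ)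
    (hL : ∀ j, L j = (K j) ⊗ₖ Pplus + ((K j).map star) ⊗ₖ Pminus) :
    (∀ j x y, ((L j) x y).im = 0) ∧
    (∑ j, (L j)ᴴ * L j = P ⊗ₖ Pplus + Pᵀ ⊗ₖ Pminus ∧
      (1 - (P ⊗ₖ Pplus + Pᵀ ⊗ₖ Pminus)).PosSemidef) ∧
    (∑ j, L j * (ρ ⊗ₖ Pplus) * (L j)ᴴ = (∑ j, K j * ρ * (K j)ᴴ) ⊗ₖ Pplus) := by
  obtain rfl : L = fun j => realDilation (K j) := funext hL
  refine ⟨fun j => realDilation_apply_im (K j), ⟨?_, ?_⟩, ?_⟩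
  · simp only [conjTranspose_realDilation_mul_self]
    rw [Finset.sum_add_distrib, ← sum_kronecker, ← sum_kronecker, ← transpose_sum, hKP]
  · have hPT : 1 - Pᵀ = (1 - P)ᵀ := by rw [transpose_sub, transpose_one]
    rw [Pminus_eq_one_sub_Pplus, one_sub_kronecker_add_kronecker_one_sub, hPT]
    exact hP.kronecker_add_kronecker_one_sub isStarProjection_Pplus hP.transpose
  · simp only [realDilation_mul_kronecker_Pplus_mul_conjTranspose]
    rw [sum_kronecker]

/-- One imbit suffices to implement a general quantum operation via a real operation:
the operators L_j = K_j ⊗ |+̂⟩⟨+̂| + K_j* ⊗ |−̂⟩⟨−̂| (i) have real entries,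
(ii) satisfy Σⱼ Lⱼᴴ Lⱼ = P ⊗ |+̂⟩⟨+̂| + Pᵀ ⊗ |−̂⟩⟨−̂| ≤ 𝟙, and
(iii) Σⱼ Lⱼ (ρ ⊗ |+̂⟩⟨+̂|) Lⱼᴴ = (Σⱼ Kⱼ ρ Kⱼᴴ) ⊗ |+̂⟩⟨+̂|. -/
theorem real_dilation_with_one_imbit {d m : ℕ}
    (K : Fin m → Matrix (Fin d) (Fin d) ℂ) (P : Matrix (Fin d) (Fin d) ℂ)
    (hKP : ∑ j, (K j)ᴴ * K j = P) (hP : (1 - P).PosSemidef)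
    (ρ : Matrix (Fin d) (Fin d) ℂ) (hρ : ρ.PosSemidef) (htr : ρ.trace = 1)
    (L : Fin m → Matrix (Fin d × Fin 2) (Fin d × Fin 2) ℂ)
    (hL : ∀ j, L j = (K j) ⊗ₖ Pplus + ((K j).map star) ⊗ₖ Pminus) :
    (∀ j x y, ((L j) x y).im = 0) ∧
    (∑ j, (L j)ᴴ * L j = P ⊗ₖ Pplus + Pᵀ ⊗ₖ Pminus ∧
      (1 - (P ⊗ₖ Pplus + Pᵀ ⊗ₖ Pminus)).PosSemidef) ∧
    (∑ j, L j * (ρ ⊗ₖ Pplus) * (L j)ᴴ = (∑ j, K j * ρ * (K j)ᴴ) ⊗ₖ Pplus) :=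
  real_dilation_with_one_imbit_general K P hKP hP ρ L hL
end

section
/- Let p₀, p₁ ≥ 0 with p₀ + p₁ = 1, let b ∈ ℝ and s ∈ ℝ³ with |b| < |s|, and let α₀, α₁ ∈ ℝ³ satisfy |α₀|, |α₁| ≤ 1 and p₀α₀ + p₁α₁ = 0. Then p₀|b + s·α₀| + p₁|b + s·α₁| ≤ |s|, and the bound |s| is attained by p₀ = p₁ = 1/2, α₀ = −α₁ = s/|s|. -/
open scoped RealInnerProductSpace

/-! For fixed outcomes `xᵢ = ⟪s, αᵢ⟫ ∈ [-‖s‖, ‖s‖]`, the map `b ↦ ∑ pᵢ |b + xᵢ|` is convex, and at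
both ends `b = ±‖s‖` of the interval it equals `‖s‖` because the mean `∑ pᵢ xᵢ` vanishes. Written
without division, the chord bound behind this is `r |b + x| ≤ r² + b x`. -/

theorem mul_abs_add_le_sq_add_mul {r b x : ℝ} (hb : |b| ≤ r) (hx : |x| ≤ r) :
    r * |b + x| ≤ r ^ 2 + b * x := by
  obtain ⟨hb₁, hb₂⟩ := abs_le.mp hb
  obtain ⟨hx₁, hx₂⟩ := abs_le.mp hx
  have hr : 0 ≤ r := (abs_nonneg b).trans hb
  rw [← abs_of_nonneg hr, ← abs_mul, abs_of_nonneg hr, abs_le]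
  constructor
  · nlinarith [mul_nonneg (neg_le_iff_add_nonneg.mp hb₁) (neg_le_iff_add_nonneg.mp hx₁)]
  · nlinarith [mul_nonneg (sub_nonneg.mpr hb₂) (sub_nonneg.mpr hx₂)]

theorem sum_mul_abs_add_le_of_sum_mul_eq_zero {ι : Type*} {t : Finset ι} {p x : ι → ℝ}
    {r b : ℝ} (hr : 0 < r) (hp : ∀ i ∈ t, 0 ≤ p i) (hp₁ : ∑ i ∈ t, p i = 1)
    (hb : |b| ≤ r) (hx : ∀ i ∈ t, |x i| ≤ r) (hmean : ∑ i ∈ t, p i * x i = 0) :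
    ∑ i ∈ t, p i * |b + x i| ≤ r := by
  refine le_of_mul_le_mul_left ?_ hr
  calc r * ∑ i ∈ t, p i * |b + x i| = ∑ i ∈ t, p i * (r * |b + x i|) := by
        rw [Finset.mul_sum]; exact Finset.sum_congr rfl fun i _ => by ring
    _ ≤ ∑ i ∈ t, p i * (r ^ 2 + b * x i) := Finset.sum_le_sum fun i hi =>
        mul_le_mul_of_nonneg_left (mul_abs_add_le_sq_add_mul hb (hx i hi)) (hp i hi)
    _ = r ^ 2 * ∑ i ∈ t, p i + b * ∑ i ∈ t, p i * x i := by
        rw [Finset.mul_sum, Finset.mul_sum, ← Finset.sum_add_distrib]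
        exact Finset.sum_congr rfl fun i _ => by ring
    _ = r * r := by rw [hp₁, hmean]; ring

section InnerProductSpace

variable {E : Type*} [NormedAddCommGroup E] [InnerProductSpace ℝ E]

theorem abs_real_inner_le_norm_of_norm_le_one (s : E) {α : E} (hα : ‖α‖ ≤ 1) :
    |⟪s, α⟫| ≤ ‖s‖ :=
  (abs_real_inner_le_norm s α).trans (mul_le_of_le_one_right (norm_nonneg s) hα)

theorem sum_mul_abs_add_inner_le_norm {ι : Type*} {t : Finset ι} {p : ι → ℝ} {α : ι → E}
    {s : E} {b : ℝ} (hp : ∀ i ∈ t, 0 ≤ p i) (hp₁ : ∑ i ∈ t, p i = 1) (hb : |b| < ‖s‖)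
    (hα : ∀ i ∈ t, ‖α i‖ ≤ 1) (hmean : ∑ i ∈ t, p i • α i = 0) :
    ∑ i ∈ t, p i * |b + ⟪s, α i⟫| ≤ ‖s‖ := by
  refine sum_mul_abs_add_le_of_sum_mul_eq_zero ((abs_nonneg b).trans_lt hb) hp hp₁ hb.le
    (fun i hi => abs_real_inner_le_norm_of_norm_le_one s (hα i hi)) ?_
  simp_rw [← real_inner_smul_right, ← inner_sum, hmean, inner_zero_right]

theorem real_inner_inv_norm_smul_self {s : E} (hs : s ≠ 0) : ⟪s, ‖s‖⁻¹ • s⟫ = ‖s‖ := by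
  rw [real_inner_smul_right, real_inner_self_eq_norm_sq]
  field_simp [norm_ne_zero_iff.mpr hs]

end InnerProductSpace

theorem abs_add_add_abs_sub_eq_two_mul {r b : ℝ} (hb : |b| ≤ r) : |b + r| + |b - r| = 2 * r := by
  obtain ⟨hb₁, hb₂⟩ := abs_le.mp hb
  rw [abs_of_nonneg (by linarith), abs_of_nonpos (by linarith)]
  ring

/-- The optimization underlying the assisted fidelity of imaginarity, case |b| < |s|:
p₀|b + s·α₀| + p₁|b + s·α₁| ≤ |s| under the POVM constraints, and the bound is
attained by p₀ = p₁ = 1/2, α₀ = −α₁ = s/|s|. -/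
theorem assisted_fidelity_optimization_lt
    (p₀ p₁ b : ℝ) (s α₀ α₁ : EuclideanSpace ℝ (Fin 3))
    (hp₀ : 0 ≤ p₀) (hp₁ : 0 ≤ p₁) (hp : p₀ + p₁ = 1)
    (hbs : |b| < ‖s‖) (hα₀ : ‖α₀‖ ≤ 1) (hα₁ : ‖α₁‖ ≤ 1)
    (hmean : p₀ • α₀ + p₁ • α₁ = 0) :
    p₀ * |b + ⟪s, α₀⟫| + p₁ * |b + ⟪s, α₁⟫| ≤ ‖s‖ ∧
    (1/2 : ℝ) * |b + ⟪s, ‖s‖⁻¹ • s⟫| + (1/2 : ℝ) * |b + ⟪s, -(‖s‖⁻¹ • s)⟫| = ‖s‖ := by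
  constructor
  · simpa using sum_mul_abs_add_inner_le_norm (t := Finset.univ) (p := ![p₀, p₁])
      (α := ![α₀, α₁]) (by simp [Fin.forall_fin_two, hp₀, hp₁]) (by simpa using hp) hbs
      (by simp [Fin.forall_fin_two, hα₀, hα₁]) (by simpa using hmean)
  · have hs : s ≠ 0 := norm_pos_iff.mp ((abs_nonneg b).trans_lt hbs)
    rw [inner_neg_right, real_inner_inv_norm_smul_self hs, ← sub_eq_add_neg]
    linarith [abs_add_add_abs_sub_eq_two_mul hbs.le]
end
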